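/- arXiv:2005.10185 — 2 statements merged into one kernel-verified Lean document; each statement's English description precedes it below -/
import Mathlib

section
/- Let E be a number field of degree n with ring of integers O_E, let d ≥ 1 be an integer, and let p be a rational prime with p > d^(2n). Suppose a ∈ O_E is nonzero, every complex embedding σ : E → ℂ satisfies |σ(a)| ≤ d·√p (i.e., a is a sum of d many p-Weil numbers of weight 1, but only the archimedean bound is needed). If v = Σ_{P | p} f_P · v_P(a), where the sum is over primes P of E above p, f_P is the absolute residue degree of P, and v_P is the P-adic valuation, then v ≤ n/2. -/
open NumberField UniqueFactorizationMonoid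
open scoped Classical

/-!
The `p`-part `∏_{P ∈ s} P ^ v_P(a)` of the ideal `(a)` divides `(a)`, so its norm `p ^ v` divides
`|Nm(a)| = ∏_σ |σ a| ≤ (d √p) ^ n`. Squaring, `p ^ (2v) ≤ d ^ (2n) p ^ n < p ^ (n + 1)`, whence
`2v ≤ n`.
-/

theorem Multiset.prod_pow_count_dvd_prod {M : Type*} [CommMonoid M] (m : Multiset M)
    (s : Finset M) : ∏ x ∈ s, x ^ m.count x ∣ m.prod := by
  rw [Finset.prod_multiset_count_of_subset m (s ∪ m.toFinset) Finset.subset_union_right]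
  exact Finset.prod_dvd_prod_of_subset _ _ _ Finset.subset_union_left

theorem NumberField.abs_norm_le_pow_finrank {K : Type*} [Field K] [NumberField K] (x : K)
    {B : ℝ} (hB : ∀ σ : K →+* ℂ, ‖σ x‖ ≤ B) :
    |(Algebra.norm ℚ x : ℝ)| ≤ B ^ Module.finrank ℚ K := by
  have hnorm : |(Algebra.norm ℚ x : ℝ)| = ∏ σ : K →ₐ[ℚ] ℂ, ‖σ x‖ := by
    rw [← norm_prod, ← Algebra.norm_eq_prod_embeddings, eq_ratCast, Complex.norm_ratCast]
  have hcard : Fintype.card (K →ₐ[ℚ] ℂ) = Module.finrank ℚ K := by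
    rw [← Embeddings.card K ℂ]
    exact Fintype.card_congr (RingHom.equivRatAlgHom K ℂ).symm
  rw [hnorm, ← hcard, ← Finset.card_univ, ← Finset.prod_const]
  exact Finset.prod_le_prod (fun σ _ => norm_nonneg _) (fun σ _ => hB σ.toRingHom)

theorem NumberField.absNorm_span_singleton_le_pow_finrank {K : Type*} [Field K] [NumberField K]
    (a : 𝓞 K) {B : ℝ} (hB : ∀ σ : K →+* ℂ, ‖σ (algebraMap (𝓞 K) K a)‖ ≤ B) :
    (Ideal.absNorm (Ideal.span {a}) : ℝ) ≤ B ^ Module.finrank ℚ K := by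
  convert abs_norm_le_pow_finrank _ hB
  rw [Ideal.absNorm_span_singleton, ← Algebra.coe_norm_int]
  push_cast [Nat.cast_natAbs]
  norm_num

theorem Nat.two_mul_le_of_pow_le_mul_sqrt_pow {p d v n : ℕ} (hp : 1 < p)
    (hpd : d ^ (2 * n) < p) (h : (p : ℝ) ^ v ≤ ((d : ℝ) * Real.sqrt p) ^ n) : 2 * v ≤ n := by
  have hsq : p ^ (2 * v) ≤ d ^ (2 * n) * p ^ n := by
    have hsquare : (((d : ℝ) * Real.sqrt p) ^ n) ^ 2 = (d : ℝ) ^ (2 * n) * (p : ℝ) ^ n := by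
      rw [← pow_mul, mul_comm n 2, pow_mul, mul_pow, Real.sq_sqrt (Nat.cast_nonneg p),
        mul_pow, ← pow_mul]
    have := pow_le_pow_left₀ (by positivity) h 2
    rw [hsquare, ← pow_mul, mul_comm v 2] at this
    exact_mod_cast this
  have : p ^ (2 * v) < p ^ (n + 1) :=
    calc p ^ (2 * v) ≤ d ^ (2 * n) * p ^ n := hsq
      _ < p * p ^ n := Nat.mul_lt_mul_of_lt_of_le hpd le_rfl (by positivity)
      _ = p ^ (n + 1) := (_root_.pow_succ' p n).symm
  have := (Nat.pow_lt_pow_iff_right hp).mp this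
  omega

theorem statement0_general (E : Type) [Field E] [NumberField E]
    (n : ℕ) (hn : Module.finrank ℚ E = n)
    (d : ℕ) (p : ℕ) (hp : p.Prime) (hpd : d ^ (2 * n) < p)
    (a : 𝓞 E) (ha : a ≠ 0)
    (habs : ∀ σ : E →+* ℂ, ‖σ (algebraMap (𝓞 E) E a)‖ ≤ (d : ℝ) * Real.sqrt p)
    (s : Finset (Ideal (𝓞 E)))
    (f : Ideal (𝓞 E) → ℕ)
    (hf : ∀ P ∈ s, Ideal.absNorm P = p ^ f P) :
    2 * ∑ P ∈ s, f P * Multiset.count P (normalizedFactors (Ideal.span {a})) ≤ n := by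
  set I : Ideal (𝓞 E) := Ideal.span {a}
  have hI : I ≠ 0 := by simpa [I, Ideal.span_singleton_eq_bot] using ha
  have hdvd : p ^ ∑ P ∈ s, f P * (normalizedFactors I).count P ∣ Ideal.absNorm I :=
    calc p ^ ∑ P ∈ s, f P * (normalizedFactors I).count P
        = Ideal.absNorm (∏ P ∈ s, P ^ (normalizedFactors I).count P) := by
          rw [map_prod, ← Finset.prod_pow_eq_pow_sum]
          refine Finset.prod_congr rfl fun P hP => ?_
          rw [map_pow, hf P hP, pow_mul]
      _ ∣ Ideal.absNorm I := map_dvd _ <| (Multiset.prod_pow_count_dvd_prod _ s).trans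
          (Ideal.prod_normalizedFactors_eq_self hI).dvd
  have hnorm_pos : 0 < Ideal.absNorm I :=
    Nat.pos_of_ne_zero (Ideal.absNorm_eq_zero_iff.not.mpr hI)
  have hle : (p : ℝ) ^ ∑ P ∈ s, f P * (normalizedFactors I).count P
      ≤ ((d : ℝ) * Real.sqrt p) ^ n :=
    calc _ ≤ (Ideal.absNorm I : ℝ) := by exact_mod_cast Nat.le_of_dvd hnorm_pos hdvd
      _ ≤ _ := hn ▸ absNorm_span_singleton_le_pow_finrank a habs
  exact Nat.two_mul_le_of_pow_le_mul_sqrt_pow hp.one_lt hpd hle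

/-- If `E` is a number field of degree `n`, `d ≥ 1`, `p` a prime with
`p > d^(2n)`, and `a ∈ 𝓞 E` is nonzero with all archimedean absolute values at most
`d·√p`, then `∑_{P ∣ p} f_P · v_P(a) ≤ n/2`. -/
theorem statement0 (E : Type) [Field E] [NumberField E]
    (n : ℕ) (hn : Module.finrank ℚ E = n)
    (d : ℕ) (hd : 1 ≤ d) (p : ℕ) (hp : p.Prime) (hpd : d ^ (2 * n) < p)
    (a : 𝓞 E) (ha : a ≠ 0)
    (habs : ∀ σ : E →+* ℂ, ‖σ (algebraMap (𝓞 E) E a)‖ ≤ (d : ℝ) * Real.sqrt p)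
    (s : Finset (Ideal (𝓞 E)))
    (hs : ∀ P : Ideal (𝓞 E), P ∈ s ↔ P.IsMaximal ∧ (p : 𝓞 E) ∈ P)
    (f : Ideal (𝓞 E) → ℕ)
    (hf : ∀ P ∈ s, Ideal.absNorm P = p ^ f P) :
    2 * ∑ P ∈ s, f P * Multiset.count P (normalizedFactors (Ideal.span {a})) ≤ n :=
  statement0_general E n hn d p hp hpd a ha habs s f hf
end

section
/- Let E be a number field with [E:ℚ] = n, d ≥ 1, and let R be the set of primes p > d^{2n}. For p ∈ R and a ∈ O_E nonzero with |σ(a)| ≤ d√p for all embeddings σ : E → ℂ, and p unramified in E: a is not divisible by p in O_E. -/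
open NumberField
open scoped Classical

/-!
If `p ∣ a` in `𝓞 E`, then `p ^ n = N(p)` divides `N(a) ≠ 0`, so `p ^ n ≤ |N(a)|`. On the other
hand `|N(a)|` is the product of the `n` absolute values `|σ a| ≤ d √p`, so
`p ^ n ≤ (d √p) ^ n`, i.e. `p ^ n ≤ d ^ (2 n)`, which contradicts `d ^ (2 n) < p ≤ p ^ n`.
-/

open Module

theorem pow_le_sq_pow_of_pow_le_mul_sqrt_pow {x y : ℝ} {n : ℕ} (hx : 0 ≤ x)
    (h : x ^ n ≤ (y * √x) ^ n) : x ^ n ≤ (y ^ 2) ^ n := by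
  have hsq : x ^ n * x ^ n ≤ (y ^ 2) ^ n * x ^ n :=
    calc x ^ n * x ^ n ≤ (y * √x) ^ n * (y * √x) ^ n := mul_self_le_mul_self (by positivity) h
      _ = (y ^ 2) ^ n * x ^ n := by
        rw [← mul_pow, ← mul_pow, mul_mul_mul_comm, Real.mul_self_sqrt hx, sq]
  rcases (pow_nonneg hx n).eq_or_lt with hzero | hpos
  · rw [← hzero]
    positivity
  · exact le_of_mul_le_mul_right hsq hpos

theorem Algebra.pow_finrank_dvd_norm_of_algebraMap_dvd {R S : Type*} [CommRing R] [CommRing S]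
    [Algebra R S] [Free R S] [Module.Finite R S] {r : R} {a : S} (h : algebraMap R S r ∣ a) :
    r ^ finrank R S ∣ Algebra.norm R a := by
  simpa only [Algebra.norm_algebraMap] using map_dvd (Algebra.norm R) h

namespace NumberField

variable {K : Type*} [Field K] [NumberField K]

theorem abs_norm_le_pow_finrank_of_forall_norm_embedding_le {x : K} {B : ℝ}
    (h : ∀ σ : K →+* ℂ, ‖σ x‖ ≤ B) : |(Algebra.norm ℚ x : ℝ)| ≤ B ^ finrank ℚ K :=
  calc |(Algebra.norm ℚ x : ℝ)| = ‖∏ σ : K →ₐ[ℚ] ℂ, σ x‖ := by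
        rw [← Algebra.norm_eq_prod_embeddings, eq_ratCast, Complex.norm_ratCast]
    _ = ∏ σ : K →ₐ[ℚ] ℂ, ‖σ x‖ := norm_prod _ _
    _ ≤ ∏ _σ : K →ₐ[ℚ] ℂ, B :=
        Finset.prod_le_prod (fun _ _ ↦ norm_nonneg _) (fun σ _ ↦ h σ.toRingHom)
    _ = B ^ finrank ℚ K := by rw [Finset.prod_const, Finset.card_univ, AlgHom.card]

theorem RingOfIntegers.pow_finrank_le_abs_norm_of_natCast_dvd {m : ℕ} {a : 𝓞 K} (ha : a ≠ 0)
    (h : (m : 𝓞 K) ∣ a) : (m : ℝ) ^ finrank ℚ K ≤ |(Algebra.norm ℚ (a : K) : ℝ)| := by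
  have hdvd : (m : ℤ) ^ finrank ℚ K ∣ Algebra.norm ℤ a := by
    rw [← RingOfIntegers.rank]
    exact Algebra.pow_finrank_dvd_norm_of_algebraMap_dvd (by simpa using h)
  have hle : (m : ℤ) ^ finrank ℚ K ≤ |Algebra.norm ℤ a| :=
    Int.le_of_dvd (abs_pos.mpr (Algebra.norm_ne_zero_iff.mpr ha)) (dvd_abs _ _ |>.mpr hdvd)
  rw [← Algebra.coe_norm_int, Rat.cast_intCast, ← Int.cast_abs]
  exact_mod_cast hle

end NumberField

theorem statement16_general (E : Type) [Field E] [NumberField E]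
    (n : ℕ) (hn : Module.finrank ℚ E = n)
    (d : ℕ) (p : ℕ) (hpd : d ^ (2 * n) < p)
    (a : 𝓞 E) (ha : a ≠ 0)
    (habs : ∀ σ : E →+* ℂ, ‖σ (algebraMap (𝓞 E) E a)‖ ≤ (d : ℝ) * Real.sqrt p) :
    ¬ (p : 𝓞 E) ∣ a := by
  intro hdvd
  subst hn
  have hlower := RingOfIntegers.pow_finrank_le_abs_norm_of_natCast_dvd ha hdvd
  have hupper := abs_norm_le_pow_finrank_of_forall_norm_embedding_le habs
  have hpow : p ^ finrank ℚ E ≤ d ^ (2 * finrank ℚ E) := by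
    rw [pow_mul]
    exact_mod_cast pow_le_sq_pow_of_pow_le_mul_sqrt_pow (Nat.cast_nonneg p) (hlower.trans hupper)
  have hp_le : p ≤ p ^ finrank ℚ E := Nat.le_self_pow finrank_pos.ne' p
  omega

/-- `E` of degree `n`, `d ≥ 1`, `p > d^(2n)` unramified in `E`,
`a ∈ 𝓞 E` nonzero with `|σ(a)| ≤ d√p` for all complex embeddings. Then `p ∤ a`. -/
theorem statement16 (E : Type) [Field E] [NumberField E]
    (n : ℕ) (hn : Module.finrank ℚ E = n)
    (d : ℕ) (hd : 1 ≤ d) (p : ℕ) (hp : p.Prime) (hpd : d ^ (2 * n) < p)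
    (hunram : Squarefree (Ideal.span {(p : 𝓞 E)}))
    (a : 𝓞 E) (ha : a ≠ 0)
    (habs : ∀ σ : E →+* ℂ, ‖σ (algebraMap (𝓞 E) E a)‖ ≤ (d : ℝ) * Real.sqrt p) :
    ¬ (p : 𝓞 E) ∣ a :=
  statement16_general E n hn d p hpd a ha habs
end
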